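/- arXiv:2004.12635 — 6 statements merged into one kernel-verified Lean document; each statement's English description precedes it below -/
import Mathlib

section
/- Every nonconstant polynomial in H[t] whose norm polynomial has no real zeros and is not divisible by the square of a real irreducible quadratic has a right zero h ∈ H, i.e., admits a right factor (t - h). -/
/-!
Write `A = A₀ + A₁ i + A₂ j + A₃ k` as the quaternion `q = ⟨A₀, A₁, A₂, A₃⟩` with coefficients in
`ℝ[X]`; its norm `normSq q` is the norm polynomial `N`. `N` is not a unit, since otherwise `q`,
and hence `A`, would be a unit. As `N` has no real zero, a monic irreducible factor `M` of `N` is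
quadratic. Dividing componentwise by `M` gives `q = (X b + c) + M s` with `b c ∈ ℍ`, and
`M ∣ N(X b + c)` since `N(r + M s) ≡ N(r) mod M`. If `b = 0` this forces `c = 0`, so `M ^ 2 ∣ N`,
which is excluded. Otherwise `X b + c = b (X - h)` with `h = -b⁻¹ c`, and comparing degrees gives
`M = N(X - h) = (X - h̄)(X - h)`, whence `q = (b + s (X - h̄)) (X - h)`.
-/

open Polynomial

def qI : Quaternion ℝ := ⟨0, 1, 0, 0⟩
def qJ : Quaternion ℝ := ⟨0, 0, 1, 0⟩
def qK : Quaternion ℝ := ⟨0, 0, 0, 1⟩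

noncomputable def toQuatPoly : Polynomial ℝ →+* Polynomial (Quaternion ℝ) :=
  Polynomial.mapRingHom (algebraMap ℝ (Quaternion ℝ))

open Quaternion

attribute [local instance] Polynomial.algebra

namespace QuaternionAlgebra

variable {R S : Type*} [CommRing R] [CommRing S] {c₁ c₂ c₃ : R} {d₁ d₂ d₃ : S}

/-- The structure constants are related by equations, so that the map `ℍ[R] →+* ℍ[S]` below needs
no transport along `f (-1) = -1`. -/
def mapRingHom (f : R →+* S) (h₁ : f c₁ = d₁) (h₂ : f c₂ = d₂) (h₃ : f c₃ = d₃) :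
    ℍ[R,c₁,c₂,c₃] →+* ℍ[S,d₁,d₂,d₃] where
  toFun q := ⟨f q.re, f q.imI, f q.imJ, f q.imK⟩
  map_one' := by ext <;> simp
  map_mul' a b := by subst h₁ h₂ h₃; ext <;> simp
  map_zero' := by ext <;> simp
  map_add' a b := by ext <;> simp

end QuaternionAlgebra

namespace Quaternion

section Map

variable {R S : Type*} [CommRing R] [CommRing S] (f : R →+* S) (q : ℍ[R])

def mapRingHom : ℍ[R] →+* ℍ[S] :=
  QuaternionAlgebra.mapRingHom f (by simp) (by simp) (by simp)

@[simp] lemma re_mapRingHom : (mapRingHom f q).re = f q.re := rfl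
@[simp] lemma imI_mapRingHom : (mapRingHom f q).imI = f q.imI := rfl
@[simp] lemma imJ_mapRingHom : (mapRingHom f q).imJ = f q.imJ := rfl
@[simp] lemma imK_mapRingHom : (mapRingHom f q).imK = f q.imK := rfl

lemma normSq_mapRingHom : normSq (mapRingHom f q) = f (normSq q) := by
  simp [normSq_def']

end Map

section CommRing

variable {R : Type*} [CommRing R]

lemma isUnit_of_isUnit_normSq {q : ℍ[R]} (h : IsUnit (normSq q)) : IsUnit q := by
  obtain ⟨u, hu⟩ := h
  refine ⟨⟨q, ↑(↑u⁻¹ : R) * star q, ?_, ?_⟩, rfl⟩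
  · rw [← mul_assoc, ← coe_commutes, mul_assoc, self_mul_star, ← hu, ← coe_mul, Units.inv_mul,
      coe_one]
  · rw [mul_assoc, star_mul_self, ← hu, ← coe_mul, Units.inv_mul, coe_one]

lemma normSq_add_smul (q s : ℍ[R]) (r : R) :
    normSq (q + r • s) = normSq q + r * (2 * (q * star s).re + r * normSq s) := by
  rw [normSq_add, normSq_smul, star_smul, mul_smul_comm, re_smul, smul_eq_mul]
  ring

lemma eq_modByMonic_add_smul_divByMonic (q : ℍ[R[X]]) (M : R[X]) :
    q = (⟨q.re %ₘ M, q.imI %ₘ M, q.imJ %ₘ M, q.imK %ₘ M⟩ : ℍ[R[X]])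
      + M • (⟨q.re /ₘ M, q.imI /ₘ M, q.imJ /ₘ M, q.imK /ₘ M⟩ : ℍ[R[X]]) := by
  apply Quaternion.ext <;> simp [modByMonic_add_div]

lemma eq_X_mul_add_of_degree_le_one {q : ℍ[R[X]]} (hre : q.re.degree ≤ 1)
    (hI : q.imI.degree ≤ 1) (hJ : q.imJ.degree ≤ 1) (hK : q.imK.degree ≤ 1) :
    q = (X : R[X])
        * mapRingHom C (⟨q.re.coeff 1, q.imI.coeff 1, q.imJ.coeff 1, q.imK.coeff 1⟩ : ℍ[R])
      + mapRingHom C (⟨q.re.coeff 0, q.imI.coeff 0, q.imJ.coeff 0, q.imK.coeff 0⟩ : ℍ[R]) := by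
  apply Quaternion.ext <;> simp [coe_mul_eq_smul, mul_comm X] <;>
    apply eq_X_add_C_of_degree_le_one <;> assumption

lemma exists_eq_X_mul_add_add_smul [Nontrivial R] (q : ℍ[R[X]]) {M : R[X]} (hM : M.Monic)
    (hM2 : M.natDegree = 2) :
    ∃ (b c : ℍ[R]) (s : ℍ[R[X]]), q = (X : R[X]) * mapRingHom C b + mapRingHom C c + M • s := by
  have hmod (p : R[X]) : (p %ₘ M).degree ≤ 1 := by
    have := (degree_modByMonic_lt p hM).trans_le degree_le_natDegree
    rw [hM2] at this
    exact Order.le_of_lt_succ this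
  rw [eq_modByMonic_add_smul_divByMonic q M]
  exact ⟨_, _, _,
    congrArg (· + _) (eq_X_mul_add_of_degree_le_one (hmod _) (hmod _) (hmod _) (hmod _))⟩

lemma normSq_X_sub (h : ℍ[R]) :
    normSq ((X : R[X]) - mapRingHom C h : ℍ[R[X]]) = X ^ 2 - C (2 * h.re) * X + C (normSq h) := by
  simp [normSq_def', C_ofNat]
  ring

lemma monic_normSq_X_sub [Nontrivial R] (h : ℍ[R]) :
    (normSq ((X : R[X]) - mapRingHom C h : ℍ[R[X]])).Monic := by
  rw [normSq_X_sub]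
  monicity!

lemma natDegree_normSq_X_sub [Nontrivial R] (h : ℍ[R]) :
    (normSq ((X : R[X]) - mapRingHom C h : ℍ[R[X]])).natDegree = 2 := by
  rw [normSq_X_sub]
  compute_degree!

end CommRing

section OrderedField

variable {K : Type*} [Field K] [LinearOrder K] [IsStrictOrderedRing K] {M : K[X]}

lemma eq_zero_of_dvd_normSq_mapRingHom_C (hM : 0 < M.degree) {c : ℍ[K]}
    (hdvd : M ∣ normSq (mapRingHom C c)) : c = 0 := by
  rw [normSq_mapRingHom] at hdvd
  by_contra hc
  have := degree_le_of_dvd hdvd (C_ne_zero.mpr (normSq_ne_zero.mpr hc))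
  rw [degree_C (normSq_ne_zero.mpr hc)] at this
  exact this.not_gt hM

lemma X_mul_add_eq_mul_X_sub {b : ℍ[K]} (hb : b ≠ 0) (c : ℍ[K]) :
    (X : K[X]) * mapRingHom C b + mapRingHom C c
      = mapRingHom C b * ((X : K[X]) - mapRingHom C (-(b⁻¹ * c))) := by
  rw [mul_sub, ← map_mul, mul_neg, mul_inv_cancel_left₀ hb, map_neg, sub_neg_eq_add,
    coe_commutes]

lemma eq_normSq_X_sub_of_dvd (hM : M.Monic) (hM2 : M.natDegree = 2) {b : ℍ[K]} (hb : b ≠ 0)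
    (h : ℍ[K]) (hdvd : M ∣ normSq (mapRingHom C b * ((X : K[X]) - mapRingHom C h))) :
    M = normSq ((X : K[X]) - mapRingHom C h : ℍ[K[X]]) := by
  rw [map_mul, normSq_mapRingHom, (isUnit_C.mpr (normSq_ne_zero.mpr hb).isUnit).dvd_mul_left]
    at hdvd
  exact (eq_of_monic_of_dvd_of_natDegree_le hM (monic_normSq_X_sub h) hdvd
    (by rw [natDegree_normSq_X_sub, hM2])).symm

theorem exists_eq_mul_X_sub_of_dvd_normSq (hM : M.Monic) (hM2 : M.natDegree = 2)
    {q : ℍ[K[X]]} (hdvd : M ∣ normSq q) (hsq : ¬ M ^ 2 ∣ normSq q) :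
    ∃ (h : ℍ[K]) (q' : ℍ[K[X]]), q = q' * ((X : K[X]) - mapRingHom C h) := by
  obtain ⟨b, c, s, rfl⟩ := exists_eq_X_mul_add_add_smul q hM hM2
  rw [normSq_add_smul] at hdvd hsq
  have hr := (dvd_add_left (dvd_mul_right _ _)).mp hdvd
  rcases eq_or_ne b 0 with rfl | hb
  · have hM0 : 0 < M.degree := by rw [degree_eq_natDegree hM.ne_zero, hM2]; norm_num
    obtain rfl : c = 0 := eq_zero_of_dvd_normSq_mapRingHom_C hM0 (by simpa using hr)
    exact absurd ⟨normSq s, by simp; ring⟩ hsq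
  · rw [X_mul_add_eq_mul_X_sub hb] at hr ⊢
    set L : ℍ[K[X]] := (X : K[X]) - mapRingHom C (-(b⁻¹ * c))
    have hML : M = normSq L := eq_normSq_X_sub_of_dvd hM hM2 hb _ hr
    refine ⟨-(b⁻¹ * c), mapRingHom C b + s * star L, ?_⟩
    -- `M • s = s * (star L * L)` because `M = normSq L` is central.
    rw [add_mul, mul_assoc, star_mul_self, ← hML, ← coe_mul_eq_smul, coe_commutes]

end OrderedField

end Quaternion

lemma Irreducible.natDegree_eq_two_of_forall_not_isRoot {p : ℝ[X]} (hp : Irreducible p)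
    (hroot : ∀ x, ¬ p.IsRoot x) : p.natDegree = 2 := by
  have h1 : p.natDegree ≠ 1 := fun h1 =>
    (exists_root_of_degree_eq_one ((degree_eq_iff_natDegree_eq hp.ne_zero).mpr h1)).elim hroot
  have := hp.natDegree_pos
  have := hp.natDegree_le_two
  omega

noncomputable def quatPolyBasis : QuaternionAlgebra.Basis ℍ[ℝ][X] (-1 : ℝ[X]) 0 (-1) where
  i := C qI
  j := C qJ
  k := C qK
  i_mul_i := by
    rw [← C_mul, show qI * qI = -1 by
      apply Quaternion.ext <;> simp only [re_mul, imI_mul, imJ_mul, imK_mul] <;> simp [qI]]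
    simp
  j_mul_j := by
    rw [← C_mul, show qJ * qJ = -1 by
      apply Quaternion.ext <;> simp only [re_mul, imI_mul, imJ_mul, imK_mul] <;> simp [qJ]]
    simp
  i_mul_j := by
    rw [← C_mul, show qI * qJ = qK by
      apply Quaternion.ext <;> simp only [re_mul, imI_mul, imJ_mul, imK_mul] <;> simp [qI, qJ, qK]]
  j_mul_i := by
    rw [← C_mul, show qJ * qI = -qK by
      apply Quaternion.ext <;> simp only [re_mul, imI_mul, imJ_mul, imK_mul, re_neg, imI_neg,
        imJ_neg, imK_neg] <;> simp [qI, qJ, qK]]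
    simp

noncomputable def polynomialAlgHom : ℍ[ℝ[X]] →ₐ[ℝ[X]] ℍ[ℝ][X] := quatPolyBasis.liftHom

lemma re_add_imI_smul_qI_add_imJ_smul_qJ_add_imK_smul_qK (c : ℍ[ℝ]) :
    (c.re : ℍ[ℝ]) + c.imI • qI + c.imJ • qJ + c.imK • qK = c := by
  apply Quaternion.ext <;> simp <;> simp [qI, qJ, qK]

lemma polynomialAlgHom_mapRingHom_C (c : ℍ[ℝ]) : polynomialAlgHom (mapRingHom C c) = C c := by
  change toQuatPoly (C c.re) + C c.imI • C qI + C c.imJ • C qJ + C c.imK • C qK = C c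
  simp only [toQuatPoly, Algebra.smul_def, Polynomial.algebraMap_def, coe_mapRingHom, map_C,
    ← C_mul, ← C_add]
  rw [← Algebra.smul_def, ← Algebra.smul_def, ← Algebra.smul_def, Quaternion.algebraMap_def,
    re_add_imI_smul_qI_add_imJ_smul_qJ_add_imK_smul_qK]

lemma polynomialAlgHom_X : polynomialAlgHom (X : ℝ[X]) = X :=
  (polynomialAlgHom.commutes X).trans (map_X _)

/-- Every nonconstant quaternion polynomial whose norm polynomial has no real zeros
and is not divisible by the square of a real irreducible quadratic has a right zero
`h ∈ ℍ`, i.e. admits a right factor `(t - h)`. -/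
theorem quaternion_polynomial_has_right_zero (A₀ A₁ A₂ A₃ : Polynomial ℝ)
    (A : Polynomial (Quaternion ℝ))
    (hA : A = toQuatPoly A₀ + toQuatPoly A₁ * C qI + toQuatPoly A₂ * C qJ
        + toQuatPoly A₃ * C qK)
    (hdeg : 1 ≤ A.degree)
    (hnoreal : ∀ r : ℝ, (A₀ ^ 2 + A₁ ^ 2 + A₂ ^ 2 + A₃ ^ 2).eval r ≠ 0)
    (hnosq : ∀ M : Polynomial ℝ, Irreducible M → M.degree = 2 →
      ¬ (M ^ 2 ∣ A₀ ^ 2 + A₁ ^ 2 + A₂ ^ 2 + A₃ ^ 2)) :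
    ∃ (h : Quaternion ℝ) (A' : Polynomial (Quaternion ℝ)), A = A' * (X - C h) := by
  set q : ℍ[ℝ[X]] := ⟨A₀, A₁, A₂, A₃⟩
  have hAq : A = polynomialAlgHom q := hA
  have hN : normSq q = A₀ ^ 2 + A₁ ^ 2 + A₂ ^ 2 + A₃ ^ 2 := normSq_def' q
  have hN_nonunit : ¬ IsUnit (normSq q) := fun hu => by
    have := natDegree_eq_zero_of_isUnit ((isUnit_of_isUnit_normSq hu).map polynomialAlgHom)
    rw [← hAq] at this
    exact absurd (hdeg.trans degree_le_natDegree) (by rw [this]; decide)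
  obtain ⟨M, hM, hMirr, hMdvd⟩ := exists_monic_irreducible_factor _ hN_nonunit
  have hM2 : M.natDegree = 2 := hMirr.natDegree_eq_two_of_forall_not_isRoot fun x hx =>
    hnoreal x (hN ▸ eval_eq_zero_of_dvd_of_eval_eq_zero hMdvd hx)
  obtain ⟨h, q', hq⟩ := exists_eq_mul_X_sub_of_dvd_normSq hM hM2 hMdvd
    (hN ▸ hnosq M hMirr ((degree_eq_iff_natDegree_eq hM.ne_zero).mpr hM2))
  refine ⟨h, polynomialAlgHom q', ?_⟩
  rw [hAq, hq, map_mul, map_sub, polynomialAlgHom_X, polynomialAlgHom_mapRingHom_C]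
end

section
/- Every monic polynomial in H[t] can be written as a product of monic linear polynomials (t - h₁)···(t - h_d) with h₁,...,h_d ∈ H. -/
/-!
For `p : ℍ[X]` the product `p * star p` has real coefficients, so by the fundamental theorem of
algebra it is divisible by a monic real polynomial `r` of degree at most 2 with a quaternion root;
`r` is central in `ℍ[X]`. Divide `p = r * s + l` with `deg l < deg r`. If `l = 0`, a root of `r`
is a root of `p`. Otherwise `r ∣ l * star l` forces `l` to be linear and `l * star l = r * c` with
`c` a nonzero constant; the root of `l` is a root of `star l * l = l * star l`, hence of `r`, hence
of `p`. Since `X` is central, a root `x` of `p` splits off a right factor `X - C x`, and induction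
on the degree finishes.
-/

open Polynomial MulOpposite

namespace Polynomial

section StarRing

variable {R : Type*} [Semiring R] [StarRing R]

/-- Coefficientwise `star`, built through `R[X]ᵐᵒᵖ ≃+* Rᵐᵒᵖ[X]` so that it reverses products. -/
noncomputable instance : Star R[X] where
  star p := unop ((opRingEquiv R).symm (p.map (starRingEquiv : R ≃+* Rᵐᵒᵖ).toRingHom))

@[simp]
theorem coeff_star (p : R[X]) (n : ℕ) : (star p).coeff n = star (p.coeff n) := by
  apply op_injective
  change op ((unop ((opRingEquiv R).symm _)).coeff n) = _
  rw [← coeff_opRingEquiv, RingEquiv.apply_symm_apply, coeff_map]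
  rfl

noncomputable instance : StarRing R[X] where
  star_involutive p := by ext; simp
  star_mul p q := by
    simp only [star, Polynomial.map_mul, map_mul, unop_mul]
  star_add p q := by ext; simp

@[simp]
theorem natDegree_star (p : R[X]) : (star p).natDegree = p.natDegree := by
  simp only [star, ← natDegree_opRingEquiv, RingEquiv.apply_symm_apply]
  exact natDegree_map_eq_of_injective (starRingEquiv (R := R)).injective p

end StarRing

theorem commute_map_algebraMap {R A : Type*} [CommSemiring R] [Semiring A] [Algebra R A]
    (r : R[X]) (f : A[X]) : Commute (r.map (algebraMap R A)) f := by
  induction r using Polynomial.induction_on with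
  | C a => simpa only [map_C, ← algebraMap_apply] using Algebra.commute_algebraMap_left a f
  | add p q hp hq => simpa only [Polynomial.map_add] using hp.add_left hq
  | monomial n a h =>
    simpa only [Polynomial.map_mul, Polynomial.map_pow, map_X, pow_succ, ← mul_assoc] using
      h.mul_left (commute_X f)

theorem eval_mul_eq_zero_of_eval_eq_zero {R : Type*} [Semiring R] (f : R[X]) {g : R[X]} {x : R}
    (hg : g.eval x = 0) : (f * g).eval x = 0 := by
  induction f using Polynomial.induction_on' with
  | add p q hp hq => rw [add_mul, eval_add, hp, hq, add_zero]
  | monomial n a =>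
    rw [← C_mul_X_pow_eq_monomial, mul_assoc, X_pow_mul, ← mul_assoc, eval_mul_X_pow, eval_C_mul,
      hg, mul_zero, zero_mul]

theorem exists_sub_C_eval_eq_mul_X_sub_C {R : Type*} [Ring R] (p : R[X]) (a : R) :
    ∃ q, p - C (p.eval a) = q * (X - C a) := by
  induction p using Polynomial.induction_on' with
  | add p q hp hq =>
    obtain ⟨u, hu⟩ := hp
    obtain ⟨v, hv⟩ := hq
    exact ⟨u + v, by rw [eval_add, C_add, add_mul, ← hu, ← hv]; abel⟩
  | monomial n c =>
    refine ⟨C c * ∑ i ∈ Finset.range n, X ^ i * C a ^ (n - 1 - i), ?_⟩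
    rw [mul_assoc, (commute_X (C a)).geom_sum₂_mul, ← C_mul_X_pow_eq_monomial, eval_C_mul,
      eval_X_pow, mul_sub, C_mul, C_pow]

theorem exists_eq_mul_X_sub_C_of_eval_eq_zero {R : Type*} [Ring R] {p : R[X]} {a : R}
    (h : p.eval a = 0) : ∃ q, p = q * (X - C a) := by
  simpa [h] using exists_sub_C_eval_eq_mul_X_sub_C p a

theorem exists_eval_eq_zero_of_natDegree_eq_one {D : Type*} [DivisionRing D] {p : D[X]}
    (h : p.natDegree = 1) : ∃ x, p.eval x = 0 := by
  have ha : p.coeff 1 ≠ 0 := by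
    simpa [← h] using leadingCoeff_ne_zero.mpr (ne_zero_of_natDegree_gt (n := 0) (by omega))
  have hp := eq_X_add_C_of_natDegree_le_one h.le
  set a := p.coeff 1
  set b := p.coeff 0
  refine ⟨-(a⁻¹ * b), ?_⟩
  rw [hp, eval_add, eval_C_mul, eval_X, eval_C, mul_neg, ← mul_assoc, mul_inv_cancel₀ ha, one_mul,
    neg_add_cancel]

theorem Monic.exists_eq_prod_X_sub_C {R : Type*} [Ring R] [Nontrivial R]
    (hroot : ∀ p : R[X], 0 < p.natDegree → ∃ x, p.eval x = 0) {p : R[X]} (hp : p.Monic) :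
    ∃ l : List R, l.length = p.natDegree ∧ p = (l.map fun a => X - C a).prod := by
  induction h : p.natDegree generalizing p with
  | zero => exact ⟨[], rfl, by simpa using (hp.natDegree_eq_zero.mp h)⟩
  | succ d ih =>
    obtain ⟨a, ha⟩ := hroot p (by omega)
    obtain ⟨q, rfl⟩ := exists_eq_mul_X_sub_C_of_eval_eq_zero ha
    have hq : q.Monic := (monic_X_sub_C a).of_mul_monic_right hp
    have hdeg : (q * (X - C a)).natDegree = q.natDegree + 1 := by
      rw [hq.natDegree_mul (monic_X_sub_C a), natDegree_X_sub_C]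
    obtain ⟨l, hl, rfl⟩ := ih hq (by omega)
    exact ⟨l ++ [a], by simp [hl, ← h, hdeg], by simp⟩

end Polynomial

open scoped Quaternion

namespace Quaternion

theorem exists_map_algebraMap_eq_of_star_eq {R : Type*} [CommRing R] [NoZeroDivisors R]
    [CharZero R] {p : ℍ[R][X]} (h : star p = p) : ∃ r : R[X], r.map (algebraMap R ℍ[R]) = p := by
  rw [← mem_lifts, lifts_iff_coeff_lifts]
  intro n
  rw [algebraMap_def, ← eq_re_iff_mem_range_coe, ← star_eq_self, ← coeff_star, h]

theorem star_map_algebraMap {R : Type*} [CommRing R] (r : R[X]) :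
    star (r.map (algebraMap R ℍ[R])) = r.map (algebraMap R ℍ[R]) := by
  ext n : 1; rw [coeff_star, coeff_map, algebraMap_def, star_coe]

theorem star_mul_self_comm (p : ℍ[ℝ][X]) : star p * p = p * star p := by
  obtain ⟨r, hr⟩ := exists_map_algebraMap_eq_of_star_eq (star_mul_star p p)
  rcases eq_or_ne p 0 with rfl | hp
  · simp
  apply mul_left_cancel₀ hp
  rw [← mul_assoc, ← hr, ← (commute_map_algebraMap r p).eq]

theorem exists_common_root_of_dvd_mul_star {r : ℝ[X]} (hr : r.Monic) (hr2 : r.natDegree ≤ 2)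
    {p : ℍ[ℝ][X]} (hp : p ≠ 0) (hdeg : p.natDegree < r.natDegree)
    (hdvd : r.map (algebraMap ℝ ℍ[ℝ]) ∣ p * star p) : ∃ x, p.eval x = 0 ∧ aeval x r = 0 := by
  obtain ⟨k, hk⟩ := hdvd
  have hpp : p * star p ≠ 0 := mul_ne_zero hp (star_ne_zero.mpr hp)
  have hk0 : k ≠ 0 := by rintro rfl; exact hpp (by rw [hk, mul_zero])
  have hdegs := natDegree_mul hp (star_ne_zero.mpr hp)
  rw [natDegree_star, hk, (hr.map _).natDegree_mul' hk0, hr.natDegree_map] at hdegs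
  obtain ⟨x, hx⟩ := exists_eval_eq_zero_of_natDegree_eq_one (p := p) (by omega)
  have hkC : k = C (k.coeff 0) := eq_C_of_natDegree_eq_zero (by omega)
  have hk00 : k.coeff 0 ≠ 0 := fun h => hk0 (by rw [hkC, h, C_0])
  have hx' : (star p * p).eval x = 0 := eval_mul_eq_zero_of_eval_eq_zero _ hx
  rw [star_mul_self_comm, hk, hkC, (commute_map_algebraMap r _).eq, eval_C_mul,
    eval_map_algebraMap] at hx'
  exact ⟨x, hx, (mul_eq_zero.mp hx').resolve_left hk00⟩

theorem exists_eval_eq_zero_of_dvd_mul_star {r : ℝ[X]} (hr : r.Monic) (hr2 : r.natDegree ≤ 2)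
    {q : ℍ[ℝ]} (hq : aeval q r = 0) {p : ℍ[ℝ][X]}
    (hdvd : r.map (algebraMap ℝ ℍ[ℝ]) ∣ p * star p) : ∃ x, p.eval x = 0 := by
  set R := r.map (algebraMap ℝ ℍ[ℝ])
  have hRm : R.Monic := hr.map _
  set l := p %ₘ R
  set s := p /ₘ R
  have hps : p = R * s + l := by rw [add_comm]; exact (modByMonic_add_div p R).symm
  have hsR : ∀ x, aeval x r = 0 → (R * s).eval x = 0 := fun x hx => by
    rw [(commute_map_algebraMap r s).eq]
    exact eval_mul_eq_zero_of_eval_eq_zero s (by rwa [eval_map_algebraMap])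
  rcases eq_or_ne l 0 with hl | hl
  · exact ⟨q, by rw [hps, hl, add_zero, hsR q hq]⟩
  have hldeg : l.natDegree < r.natDegree := by
    rw [← hr.natDegree_map (algebraMap ℝ ℍ[ℝ])]
    exact natDegree_lt_natDegree hl (degree_modByMonic_lt p hRm)
  have hll : R ∣ l * star l := by
    have hstar : star p = star s * R + star l := by
      rw [hps, star_add, star_mul, star_map_algebraMap]
    have : p * star p = R * (s * star p + l * star s) + l * star l := by
      nth_rewrite 1 [hps]
      rw [hstar, add_mul, mul_add l, ← mul_assoc l, ← (commute_map_algebraMap r (l * star s)).eq,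
        mul_add R, mul_assoc R s, add_assoc]
    rw [eq_sub_of_add_eq' this.symm]
    exact dvd_sub hdvd (dvd_mul_right _ _)
  obtain ⟨x, hxl, hxr⟩ := exists_common_root_of_dvd_mul_star hr hr2 hl hldeg hll
  exact ⟨x, by rw [hps, eval_add, hsR x hxr, hxl, add_zero]⟩

theorem exists_eval_eq_zero {p : ℍ[ℝ][X]} (hp : 0 < p.natDegree) : ∃ x, p.eval x = 0 := by
  obtain ⟨n, hn⟩ := exists_map_algebraMap_eq_of_star_eq (star_mul_star p p)
  have hn0 : n.degree ≠ 0 := by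
    have hp0 : p ≠ 0 := ne_zero_of_natDegree_gt hp
    have : n.natDegree = 2 * p.natDegree := by
      rw [← natDegree_map_eq_of_injective (algebraMap ℝ ℍ[ℝ]).injective, hn,
        natDegree_mul hp0 (star_ne_zero.mpr hp0), natDegree_star, two_mul]
    exact (natDegree_pos_iff_degree_pos.mp (by omega)).ne'
  obtain ⟨z, hz⟩ := IsAlgClosed.exists_aeval_eq_zero ℂ n hn0
  have hzi : IsIntegral ℝ z := Algebra.IsIntegral.isIntegral z
  refine exists_eval_eq_zero_of_dvd_mul_star (minpoly.monic hzi)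
    ((minpoly.natDegree_le z).trans Complex.finrank_real_complex.le) (q := ofComplex z)
    (by rw [aeval_algHom_apply, minpoly.aeval, map_zero]) ?_
  rw [← hn]
  exact Polynomial.map_dvd _ (minpoly.dvd ℝ z hz)

end Quaternion

/-- Every monic polynomial over the quaternions can be written as a product of
monic linear polynomials `(t - h₁) ⋯ (t - h_d)`: the quaternions are
"algebraically closed". -/
theorem quaternion_polynomial_factors_into_linear (P : Polynomial (Quaternion ℝ))
    (hP : P.Monic) :
    ∃ L : List (Quaternion ℝ), L.length = P.natDegree ∧
      P = (L.map fun h => X - C h).prod :=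
  hP.exists_eq_prod_X_sub_C fun _ => Quaternion.exists_eval_eq_zero
end

section
/- Let A ∈ H[t] with deg A ≥ 1, let M ∈ ℝ[t] be a monic irreducible quadratic dividing N(A), and write A = Q·M + R by division with remainder. If R ≠ 0 then deg R = 1; the case deg R = 0 cannot occur. -/
/-!
Identify `ℍ[ℝ][X]` with `ℍ[ℝ[X]]`, where `A` becomes the quaternion `(A₀, A₁, A₂, A₃)` with
norm `N(A) = A₀² + A₁² + A₂² + A₃²`, and `M` becomes central. If `A = Q M + r` with `r ∈ ℍ`,
then `N(A) ≡ N(r) = |r|²` modulo `M`, so `M ∣ N(A)` forces `M ∣ |r|²`; a polynomial of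
degree 2 divides no nonzero constant, hence `r = 0`.
-/

open Polynomial

namespace Quaternion

variable {R : Type*} [CommRing R]

theorem dvd_normSq_mul_coe_add_sub_normSq (q r : ℍ[R]) (m : R) :
    m ∣ normSq (q * (m : ℍ[R]) + r) - normSq r := by
  refine ⟨m * normSq q + 2 * (q.re * r.re + q.imI * r.imI + q.imJ * r.imJ + q.imK * r.imK), ?_⟩
  simp only [mul_coe_eq_smul, normSq_def', re_add, imI_add, imJ_add, imK_add, re_smul,
    imI_smul, imJ_smul, imK_smul, smul_eq_mul]
  ring

noncomputable def mapC : ℍ[R] →+* ℍ[R[X]] where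
  toFun a := ⟨C a.re, C a.imI, C a.imJ, C a.imK⟩
  map_one' := by apply Quaternion.ext <;> simp
  map_zero' := by apply Quaternion.ext <;> simp
  map_add' a b := by apply Quaternion.ext <;> exact map_add C _ _
  map_mul' a b := by
    -- `re_mul` does not fire on the structure literals as elaborated here, only on terms of
    -- declared type `ℍ[R[X]]`.
    let f (q : ℍ[R]) : ℍ[R[X]] := ⟨C q.re, C q.imI, C q.imJ, C q.imK⟩
    change f (a * b) = f a * f b
    apply Quaternion.ext <;> simp only [re_mul, imI_mul, imJ_mul, imK_mul] <;> simp [f]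

@[simp] theorem re_mapC (a : ℍ[R]) : (mapC a).re = C a.re := rfl
@[simp] theorem imI_mapC (a : ℍ[R]) : (mapC a).imI = C a.imI := rfl
@[simp] theorem imJ_mapC (a : ℍ[R]) : (mapC a).imJ = C a.imJ := rfl
@[simp] theorem imK_mapC (a : ℍ[R]) : (mapC a).imK = C a.imK := rfl

theorem normSq_mapC (a : ℍ[R]) : normSq (mapC a) = C (normSq a) := by
  simp [normSq_def']

end Quaternion

namespace Polynomial

open Quaternion

variable {R : Type*} [CommRing R]

noncomputable def toQuaternion : ℍ[R][X] →+* ℍ[R[X]] :=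
  eval₂RingHom' mapC (X : R[X]) fun _ => (coe_commute _ _).symm

@[simp] theorem toQuaternion_C (a : ℍ[R]) : toQuaternion (C a) = mapC a :=
  eval₂_C _ _

theorem toQuaternion_map_algebraMap (P : R[X]) :
    toQuaternion (P.map (algebraMap R ℍ[R])) = (P : ℍ[R[X]]) := by
  suffices toQuaternion.comp (mapRingHom (algebraMap R ℍ[R])) = algebraMap R[X] ℍ[R[X]] from
    DFunLike.congr_fun this P
  refine ringHom_ext (fun a => ?_) ?_
  · apply Quaternion.ext <;> simp
  · simp [toQuaternion]

theorem dvd_C_normSq_of_eq_mul_add_C {A Q : ℍ[R][X]} {M : R[X]} {r : ℍ[R]}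
    (hdiv : A = Q * M.map (algebraMap R ℍ[R]) + C r) (hM : M ∣ normSq (toQuaternion A)) :
    M ∣ C (normSq r) := by
  have hA : toQuaternion A = toQuaternion Q * (M : ℍ[R[X]]) + mapC r := by
    rw [hdiv, map_add, map_mul, toQuaternion_C, toQuaternion_map_algebraMap]
  have h := dvd_normSq_mul_coe_add_sub_normSq (toQuaternion Q) (mapC r) M
  rwa [← hA, normSq_mapC, dvd_sub_right hM] at h

end Polynomial

open Quaternion in
theorem normSq_toQuaternion_components (A₀ A₁ A₂ A₃ : ℝ[X]) :
    normSq (toQuaternion (toQuatPoly A₀ + toQuatPoly A₁ * C qI + toQuatPoly A₂ * C qJ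
      + toQuatPoly A₃ * C qK)) = A₀ ^ 2 + A₁ ^ 2 + A₂ ^ 2 + A₃ ^ 2 := by
  simp only [normSq_def', map_add, map_mul, toQuaternion_C, toQuatPoly, coe_mapRingHom,
    toQuaternion_map_algebraMap, coe_mul_eq_smul, re_add, imI_add, imJ_add, imK_add, re_smul,
    imI_smul, imJ_smul, imK_smul, re_mapC, imI_mapC, imJ_mapC, imK_mapC]
  simp [qI, qJ, qK]

theorem remainder_mod_irreducible_quadratic_not_constant_general
    (A₀ A₁ A₂ A₃ : Polynomial ℝ) (A Q R : Polynomial (Quaternion ℝ))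
    (hA : A = toQuatPoly A₀ + toQuatPoly A₁ * C qI + toQuatPoly A₂ * C qJ
        + toQuatPoly A₃ * C qK)
    (M : Polynomial ℝ) (hM2 : M.degree = 2)
    (hdvd : M ∣ A₀ ^ 2 + A₁ ^ 2 + A₂ ^ 2 + A₃ ^ 2)
    (hdivision : A = Q * toQuatPoly M + R) (hRdeg : R.degree < 2) :
    R ≠ 0 → R.degree = 1 := by
  intro hR0
  have hR_ne_const : R.degree ≠ 0 := by
    intro hRdeg0
    have hRC : R = C (R.coeff 0) := eq_C_of_degree_eq_zero hRdeg0
    have hnorm : Quaternion.normSq (R.coeff 0) ≠ 0 :=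
      Quaternion.normSq_ne_zero.2 fun h => hR0 (by rw [hRC, h, map_zero])
    have hMr : M ∣ C (Quaternion.normSq (R.coeff 0)) :=
      dvd_C_normSq_of_eq_mul_add_C (hRC ▸ hdivision)
        (by rwa [hA, normSq_toQuaternion_components])
    have hdeg := degree_le_of_dvd hMr (C_ne_zero.2 hnorm)
    rw [hM2, degree_C hnorm] at hdeg
    exact absurd hdeg (by decide)
  rw [degree_eq_natDegree hR0] at hRdeg hR_ne_const ⊢
  norm_cast at *
  omega

/-- Let `A ∈ ℍ[t]` with `deg A ≥ 1`, let `M ∈ ℝ[t]` be a monic irreducible quadratic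
dividing the norm polynomial `N(A)`, and write `A = Q·M + R` by division with
remainder.  If `R ≠ 0` then `deg R = 1`; the case `deg R = 0` cannot occur. -/
theorem remainder_mod_irreducible_quadratic_not_constant
    (A₀ A₁ A₂ A₃ : Polynomial ℝ) (A Q R : Polynomial (Quaternion ℝ))
    (hA : A = toQuatPoly A₀ + toQuatPoly A₁ * C qI + toQuatPoly A₂ * C qJ
        + toQuatPoly A₃ * C qK)
    (hdeg : 1 ≤ A.degree)
    (M : Polynomial ℝ) (hmonic : M.Monic) (hirr : Irreducible M) (hM2 : M.degree = 2)
    (hdvd : M ∣ A₀ ^ 2 + A₁ ^ 2 + A₂ ^ 2 + A₃ ^ 2)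
    (hdivision : A = Q * toQuatPoly M + R) (hRdeg : R.degree < 2) :
    R ≠ 0 → R.degree = 1 :=
  remainder_mod_irreducible_quadratic_not_constant_general A₀ A₁ A₂ A₃ A Q R hA M hM2 hdvd hdivision
    hRdeg
end

section
/- An element of SE₃, represented as a point of the group variety X ⊂ P¹⁶ with h ≠ 0, has order 2 if and only if its scalar part vanishes; equivalently, under the dual-quaternion model, a dual quaternion g with real nonzero norm represents an involution in SE₃ = S/ℝ* if and only if the coefficients of 1 and of ε in g are both zero. -/
/-- The dual quaternions, as quaternions over the dual numbers. -/
abbrev DualQuat : Type := Quaternion (DualNumber ℝ)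

/-!
Since `g * star g = n`, the quadratic relation `g ^ 2 = 2 Re(g) g - n` turns `g ^ 2 ∈ ℝ` into
`2 Re(g) g ∈ ℝ`. If the primal part of `Re g` is nonzero, `Re g` is a unit of the dual numbers,
so `g` is a dual number with real square, hence real. If `Re g = b ε` with `b ≠ 0`, then
`ε g ∈ ℝ` forces the primal part of `g` to vanish, and with it `n`. Conversely, `Re g = 0`
gives `g ^ 2 = -n`.
-/

open Quaternion TrivSqZeroExt

namespace TrivSqZeroExt

variable {R M : Type*} [AddMonoidWithOne R] [AddMonoid M]

@[simp]
theorem fst_ofNat (n : ℕ) [n.AtLeastTwo] : (ofNat(n) : TrivSqZeroExt R M).fst = ofNat(n) :=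
  rfl

@[simp]
theorem snd_ofNat (n : ℕ) [n.AtLeastTwo] : (ofNat(n) : TrivSqZeroExt R M).snd = 0 :=
  rfl

end TrivSqZeroExt

namespace DualNumber

variable {K : Type*} [Field K]

theorem eq_zero_of_mul_eq_zero_of_fst_ne_zero {x y : DualNumber K} (hx : x.fst ≠ 0)
    (h : x * y = 0) : y = 0 :=
  ((isUnit_iff_isUnit_fst.mpr hx.isUnit).mul_right_eq_zero).mp h

theorem fst_eq_zero_of_mul_eq_zero_of_fst_eq_zero {R : Type*} [CommRing R] [NoZeroDivisors R]
    {x y : DualNumber R} (hx : x.fst = 0) (hx' : x.snd ≠ 0) (h : x * y = 0) : y.fst = 0 := by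
  have hxy : x.snd * y.fst = 0 := by simpa [hx] using congrArg snd h
  exact (mul_eq_zero.mp hxy).resolve_left hx'

end DualNumber

namespace Quaternion

theorem sq_eq_coe_two_mul_re_mul_sub_mul_star {R : Type*} [CommRing R] (a : ℍ[R]) :
    a ^ 2 = ↑(2 * a.re) * a - a * star a := by
  rw [sq, ← star_comm_self', ← self_add_star', add_mul]
  abel

theorem algebraMap_dualNumber_eq_coe_inl {R : Type*} [CommRing R] (c : R) :
    (algebraMap R ℍ[DualNumber R] : R →+* ℍ[DualNumber R]) c =
      ((inl c : DualNumber R) : ℍ[DualNumber R]) :=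
  rfl

theorem fst_normSq_eq_zero_of_coe_mul_eq_coe_inl {R : Type*} [CommRing R] [NoZeroDivisors R]
    {x : DualNumber R} {g : ℍ[DualNumber R]} {m : R} (hx₀ : x.fst = 0) (hx₁ : x.snd ≠ 0)
    (h : x * g = ((inl m : DualNumber R) : ℍ[DualNumber R])) : (normSq g).fst = 0 := by
  rw [coe_mul_eq_smul] at h
  have hm : m = 0 := by simpa [hx₀] using (congrArg (fun q => q.re.fst) h).symm
  subst hm
  have hfst (y : DualNumber R) (hy : x * y = 0) : y.fst = 0 :=
    DualNumber.fst_eq_zero_of_mul_eq_zero_of_fst_eq_zero hx₀ hx₁ hy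
  have hre := hfst _ (by simpa using congrArg QuaternionAlgebra.re h)
  have hI := hfst _ (by simpa using congrArg QuaternionAlgebra.imI h)
  have hJ := hfst _ (by simpa using congrArg QuaternionAlgebra.imJ h)
  have hK := hfst _ (by simpa using congrArg QuaternionAlgebra.imK h)
  simp [normSq_def', hre, hI, hJ, hK]

variable {K : Type*} [Field K]

theorem exists_eq_coe_inl_of_coe_two_mul_re_mul_eq_coe_inl [NeZero (2 : K)]
    {g : ℍ[DualNumber K]} {m : K} (hg : g.re.fst ≠ 0)
    (h : ↑(2 * g.re) * g = ((inl m : DualNumber K) : ℍ[DualNumber K])) :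
    ∃ c : K, g = ((inl c : DualNumber K) : ℍ[DualNumber K]) := by
  rw [coe_mul_eq_smul] at h
  have hr : (2 * g.re).fst ≠ 0 := by simpa [two_ne_zero] using hg
  have him (y : DualNumber K) (hy : (2 * g.re) * y = 0) : y = 0 :=
    DualNumber.eq_zero_of_mul_eq_zero_of_fst_ne_zero hr hy
  have hI := him _ (by simpa using congrArg QuaternionAlgebra.imI h)
  have hJ := him _ (by simpa using congrArg QuaternionAlgebra.imJ h)
  have hK := him _ (by simpa using congrArg QuaternionAlgebra.imK h)
  have hsnd : g.re.snd = 0 := by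
    have hre : 2 * g.re * g.re = inl m := by simpa using congrArg QuaternionAlgebra.re h
    have h₀ : 2 * (2 * (g.re.fst * g.re.snd)) = 0 := by
      have := congrArg snd hre
      simp only [snd_mul, fst_mul, fst_ofNat, smul_eq_mul, snd_ofNat, smul_zero, add_zero,
        MulOpposite.smul_eq_mul_unop, MulOpposite.unop_op, snd_inl] at this
      linear_combination this
    simpa [two_ne_zero, hg] using h₀
  exact ⟨g.re.fst, by ext <;> simp [hI, hJ, hK, hsnd]⟩

theorem re_eq_zero_of_coe_two_mul_re_mul_eq_coe_inl [NeZero (2 : K)] {g : ℍ[DualNumber K]}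
    {m : K} (hg : (normSq g).fst ≠ 0)
    (hg' : ¬∃ c : K, g = ((inl c : DualNumber K) : ℍ[DualNumber K]))
    (h : ↑(2 * g.re) * g = ((inl m : DualNumber K) : ℍ[DualNumber K])) : g.re = 0 := by
  by_cases hg₀ : g.re.fst = 0
  · by_contra hre
    have hg₁ : g.re.snd ≠ 0 := fun hg₁ => hre (TrivSqZeroExt.ext hg₀ hg₁)
    refine hg (fst_normSq_eq_zero_of_coe_mul_eq_coe_inl ?_ ?_ h)
    · simp [hg₀]
    · simpa [two_ne_zero] using hg₁
  · exact absurd (exists_eq_coe_inl_of_coe_two_mul_re_mul_eq_coe_inl hg₀ h) hg'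

end Quaternion

/-- A dual quaternion `g` with real nonzero norm represents an element of order 2 of
`SE₃ = S/ℝ*` (its square is a nonzero real scalar, but `g` itself is not a real scalar)
if and only if its scalar part vanishes, i.e. the coefficients of `1` and of `ε` in `g`
are both zero. -/
theorem involution_iff_scalar_part_vanishes (g : DualQuat) (n : ℝ) (hn : n ≠ 0)
    (hnorm : g * star g = (algebraMap ℝ DualQuat : ℝ →+* DualQuat) n) :
    ((∃ c : ℝ, c ≠ 0 ∧ g ^ 2 = (algebraMap ℝ DualQuat : ℝ →+* DualQuat) c) ∧
        ¬ ∃ c : ℝ, g = (algebraMap ℝ DualQuat : ℝ →+* DualQuat) c) ↔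
      g.re.fst = 0 ∧ g.re.snd = 0 := by
  simp only [algebraMap_dualNumber_eq_coe_inl] at hnorm ⊢
  have hnormSq : (normSq g).fst = n := by
    rw [self_mul_star, coe_inj] at hnorm
    rw [hnorm, fst_inl]
  have hsq : g ^ 2 = ↑(2 * g.re) * g - ((inl n : DualNumber ℝ) : DualQuat) := by
    rw [sq_eq_coe_two_mul_re_mul_sub_mul_star, hnorm]
  have hre_eq_zero : g.re.fst = 0 ∧ g.re.snd = 0 ↔ g.re = 0 :=
    (TrivSqZeroExt.ext_iff (x := g.re) (y := 0)).symm
  rw [hre_eq_zero]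
  constructor
  · rintro ⟨⟨c, -, hc⟩, hg⟩
    refine re_eq_zero_of_coe_two_mul_re_mul_eq_coe_inl (m := c + n) (hnormSq ▸ hn) hg ?_
    rw [inl_add, coe_add, ← hc, hsq, sub_add_cancel]
  · intro hre
    refine ⟨⟨-n, neg_ne_zero.mpr hn, by simp [hsq, hre]⟩, ?_⟩
    rintro ⟨c, rfl⟩
    obtain rfl : c = 0 := by simpa using congrArg fst hre
    simp [← hnormSq] at hn
end

section
/- Let (V,E) be a graph and β a point of the boundary of its configuration variety in P^{|V|−2} × P^{|V|−2} (i.e., β satisfies all edge equations λ_e(z_k−z_l)(w_k−w_l) = λ_f(z_i−z_j)(w_i−w_j) and (z_i−z_j)(w_i−w_j) = 0 for every edge). Color an edge (i,j) red if z_i − z_j vanishes at β and blue otherwise. Then this coloring is a NAC-coloring: both color classes are nonempty and every cycle is either monochromatic or contains at least two edges of each color. -/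
open PowerSeries

/-! The edge equations force `(z_i - z_j)(w_i - w_j)` to have the same order `A ≥ 1` on every
edge. On a blue edge `z_i - z_j` has order `0`, so `w_i - w_j` has order `A`; on a red edge
`w_i - w_j` has order `< A`. The differences along a cycle sum to zero, so a cycle cannot have a
single red edge (its `w`-difference would be the unique term of lowest order) nor a single blue
edge (its `z`-difference would be the unique term with nonzero constant coefficient). If all
edges were red (resp. blue), the constant terms of `z` (resp. `w`) would be constant on the
connected graph, hence zero by the normalization at `v₀`, which is not a projective point. -/

/-- An edge `{i,j}` is red at a boundary point if the form `z_i - z_j` vanishes there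
(the boundary point is recorded by the constant coefficients of power series that
parametrize a branch of the configuration variety through it). -/
def IsRedEdge {V : Type} (z : V → PowerSeries ℂ) (i j : V) : Prop :=
  PowerSeries.constantCoeff (z i - z j) = 0

theorem SimpleGraph.Walk.apply_eq_of_forall_adj {V α : Type*} {G : SimpleGraph V} {f : V → α}
    (h : ∀ u v, G.Adj u v → f u = f v) {u v : V} (p : G.Walk u v) : f u = f v := by
  induction p with
  | nil => rfl
  | cons hadj _ ih => exact (h _ _ hadj).trans ih

theorem SimpleGraph.Connected.apply_eq_of_forall_adj {V α : Type*} {G : SimpleGraph V}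
    (hconn : G.Connected) {f : V → α} (h : ∀ u v, G.Adj u v → f u = f v) (u v : V) :
    f u = f v :=
  (hconn u v).elim (·.apply_eq_of_forall_adj h)

theorem Fin.sum_sub_add_one_eq_zero {M : Type*} [AddCommGroup M] {N : ℕ} [NeZero N]
    (g : Fin N → M) : ∑ i, (g i - g (i + 1)) = 0 := by
  rw [Finset.sum_sub_distrib, sub_eq_zero]
  exact (Equiv.sum_comp (Equiv.addRight 1) g).symm

namespace PowerSeries

variable {R : Type*} [Semiring R]

theorem order_eq_zero_of_constantCoeff_ne_zero {φ : R⟦X⟧}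
    (h : constantCoeff φ ≠ 0) : φ.order = 0 :=
  not_ne_iff.mp (mt order_ne_zero_iff_constCoeff_eq_zero.mp h)

theorem order_C_mul [NoZeroDivisors R] {a : R} (ha : a ≠ 0) (φ : R⟦X⟧) :
    (C a * φ).order = φ.order := by
  rw [order_mul, order_eq_zero_of_constantCoeff_ne_zero (by simpa using ha), zero_add]

theorem eq_zero_of_sum_eq_zero_of_order_lt {ι : Type*} {s : Finset ι}
    {f : ι → R⟦X⟧} {k : ι} (hsum : ∑ i ∈ s, f i = 0) (hk : k ∈ s)
    (hlt : ∀ i ∈ s, i ≠ k → (f k).order < (f i).order) : f k = 0 := by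
  by_contra hfk
  apply coeff_order hfk
  have hsingle : coeff (f k).order.toNat (∑ i ∈ s, f i) = coeff (f k).order.toNat (f k) := by
    rw [map_sum]
    refine Finset.sum_eq_single_of_mem k hk fun i hi hik => coeff_of_lt_order _ ?_
    rw [coe_toNat_order hfk]
    exact hlt i hi hik
  rw [← hsingle, hsum, map_zero]

end PowerSeries

section Branch

variable {V : Type} {G : SimpleGraph V} {z w : V → ℂ⟦X⟧}

def EdgeFormsHaveOrder (G : SimpleGraph V) (z w : V → ℂ⟦X⟧) (A : ℕ) : Prop :=
  ∀ i j, G.Adj i j → (z i - z j).order + (w i - w j).order = A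

theorem exists_edgeFormsHaveOrder {lam : V → V → ℝ}
    (hpos : ∀ u v, G.Adj u v → 0 < lam u v)
    (heq : ∀ i j k l, G.Adj i j → G.Adj k l →
      C ((lam i j : ℝ) : ℂ) * ((z k - z l) * (w k - w l)) =
        C ((lam k l : ℝ) : ℂ) * ((z i - z j) * (w i - w j)))
    (hgen : ∃ i j, G.Adj i j ∧ (z i - z j) * (w i - w j) ≠ 0)
    (hboundary : ∀ i j, G.Adj i j → constantCoeff ((z i - z j) * (w i - w j)) = 0) :
    ∃ A : ℕ, 1 ≤ A ∧ EdgeFormsHaveOrder G z w A := by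
  obtain ⟨i₀, j₀, h₀, hP⟩ := hgen
  have hlam : ∀ i j, G.Adj i j → ((lam i j : ℝ) : ℂ) ≠ 0 := fun i j hij =>
    Complex.ofReal_ne_zero.mpr (hpos i j hij).ne'
  refine ⟨((z i₀ - z j₀) * (w i₀ - w j₀)).order.toNat, ?_, fun i j hij => ?_⟩
  · have h1 := one_le_order_iff_constCoeff_eq_zero.mpr (hboundary i₀ j₀ h₀)
    rw [← coe_toNat_order hP] at h1
    exact_mod_cast h1
  · have h := congrArg order (heq i₀ j₀ i j h₀ hij)
    rw [order_C_mul (hlam _ _ h₀), order_C_mul (hlam _ _ hij)] at h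
    rw [← order_mul, h, coe_toNat_order hP]

theorem EdgeFormsHaveOrder.order_sub_eq_of_not_isRedEdge {A : ℕ}
    (hA : EdgeFormsHaveOrder G z w A) {i j : V} (hij : G.Adj i j)
    (hblue : ¬ IsRedEdge z i j) : (w i - w j).order = A := by
  rw [← hA i j hij, order_eq_zero_of_constantCoeff_ne_zero hblue, zero_add]

theorem EdgeFormsHaveOrder.order_sub_lt_of_isRedEdge {A : ℕ}
    (hA : EdgeFormsHaveOrder G z w A) {i j : V} (hij : G.Adj i j)
    (hred : IsRedEdge z i j) : (w i - w j).order < A := by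
  have h := hA i j hij
  have hz : 1 ≤ (z i - z j).order := one_le_order_iff_constCoeff_eq_zero.mpr hred
  have hw : (w i - w j).order ≠ ⊤ :=
    ne_top_of_le_ne_top (ENat.natCast_ne_top A) (h ▸ le_add_self)
  have hz' : (z i - z j).order ≠ ⊤ :=
    ne_top_of_le_ne_top (ENat.natCast_ne_top A) (h ▸ le_self_add)
  lift (w i - w j).order to ℕ using hw with a
  lift (z i - z j).order to ℕ using hz' with b
  norm_cast at h hz ⊢
  omega

theorem constantCoeff_eq_zero_of_forall_adj {x : V → ℂ⟦X⟧} {v₀ : V} (hconn : G.Connected)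
    (hx0 : x v₀ = 0) (h : ∀ i j, G.Adj i j → constantCoeff (x i - x j) = 0) (v : V) :
    constantCoeff (x v) = 0 := by
  rw [← map_zero constantCoeff, ← hx0]
  refine hconn.apply_eq_of_forall_adj (f := fun v => constantCoeff (x v)) (fun i j hij => ?_)
    v v₀
  rw [← sub_eq_zero, ← map_sub]
  exact h i j hij

theorem exists_isRedEdge {A : ℕ} {v₀ : V} (hconn : G.Connected) (hw0 : w v₀ = 0)
    (hwproj : ∃ v, constantCoeff (w v) ≠ 0) (hA : EdgeFormsHaveOrder G z w A)
    (hA1 : 1 ≤ A) :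
    ∃ i j, G.Adj i j ∧ IsRedEdge z i j := by
  by_contra! hblue
  obtain ⟨v, hv⟩ := hwproj
  refine hv (constantCoeff_eq_zero_of_forall_adj hconn hw0 (fun i j hij => ?_) v)
  rw [← one_le_order_iff_constCoeff_eq_zero, hA.order_sub_eq_of_not_isRedEdge hij (hblue i j hij)]
  exact_mod_cast hA1

theorem exists_not_isRedEdge {v₀ : V} (hconn : G.Connected) (hz0 : z v₀ = 0)
    (hzproj : ∃ v, constantCoeff (z v) ≠ 0) : ∃ i j, G.Adj i j ∧ ¬ IsRedEdge z i j := by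
  by_contra! hred
  obtain ⟨v, hv⟩ := hzproj
  exact hv (constantCoeff_eq_zero_of_forall_adj hconn hz0 hred v)

theorem EdgeFormsHaveOrder.ncard_setOf_isRedEdge_ne_one {A : ℕ}
    (hA : EdgeFormsHaveOrder G z w A) {N : ℕ} [NeZero N] (c : Fin N → V)
    (hc : ∀ i, G.Adj (c i) (c (i + 1))) :
    {i | IsRedEdge z (c i) (c (i + 1))}.ncard ≠ 1 := by
  intro h1
  obtain ⟨k, hk⟩ := Set.ncard_eq_one.mp h1
  have hred : IsRedEdge z (c k) (c (k + 1)) := (hk ▸ Set.mem_singleton k :)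
  have hlt := hA.order_sub_lt_of_isRedEdge (hc k) hred
  refine order_finite_iff_ne_zero.mp (hlt.trans (ENat.natCast_lt_top A)) ?_
  refine eq_zero_of_sum_eq_zero_of_order_lt (f := fun i => w (c i) - w (c (i + 1)))
    (Fin.sum_sub_add_one_eq_zero _) (Finset.mem_univ k) fun i _ hik => ?_
  have hblue : ¬ IsRedEdge z (c i) (c (i + 1)) := fun h =>
    hik (Set.mem_singleton_iff.mp (hk ▸ h))
  rw [hA.order_sub_eq_of_not_isRedEdge (hc i) hblue]
  exact hlt

theorem ncard_setOf_not_isRedEdge_ne_one {N : ℕ} [NeZero N] (c : Fin N → V) :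
    {i | ¬ IsRedEdge z (c i) (c (i + 1))}.ncard ≠ 1 := by
  intro h1
  obtain ⟨k, hk⟩ := Set.ncard_eq_one.mp h1
  have hblue : ¬ IsRedEdge z (c k) (c (k + 1)) := (hk ▸ Set.mem_singleton k :)
  refine hblue ?_
  rw [IsRedEdge, eq_zero_of_sum_eq_zero_of_order_lt (f := fun i => z (c i) - z (c (i + 1)))
    (Fin.sum_sub_add_one_eq_zero _) (Finset.mem_univ k) fun i _ hik => ?_, map_zero]
  have hred : IsRedEdge z (c i) (c (i + 1)) := not_not.mp fun h =>
    hik (Set.mem_singleton_iff.mp (hk ▸ h))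
  rw [order_eq_zero_of_constantCoeff_ne_zero hblue]
  exact Order.one_le_iff_pos.mp (one_le_order_iff_constCoeff_eq_zero.mpr hred)

end Branch

theorem boundary_point_gives_NAC_coloring_general
    (V : Type) (G : SimpleGraph V) (hconn : G.Connected)
    (lam : V → V → ℝ)
    (hpos : ∀ u v, G.Adj u v → 0 < lam u v)
    (z w : V → PowerSeries ℂ) (v₀ : V) (hz0 : z v₀ = 0) (hw0 : w v₀ = 0)
    (heq : ∀ i j k l, G.Adj i j → G.Adj k l →
      PowerSeries.C ((lam i j : ℝ) : ℂ) * ((z k - z l) * (w k - w l)) =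
        PowerSeries.C ((lam k l : ℝ) : ℂ) * ((z i - z j) * (w i - w j)))
    (hgen : ∃ i j, G.Adj i j ∧ (z i - z j) * (w i - w j) ≠ 0)
    (hboundary : ∀ i j, G.Adj i j →
      PowerSeries.constantCoeff ((z i - z j) * (w i - w j)) = 0)
    (hzproj : ∃ v, PowerSeries.constantCoeff (z v) ≠ 0)
    (hwproj : ∃ v, PowerSeries.constantCoeff (w v) ≠ 0) :
    (∃ i j, G.Adj i j ∧ IsRedEdge z i j) ∧
    (∃ i j, G.Adj i j ∧ ¬ IsRedEdge z i j) ∧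
    ∀ (n : ℕ) (c : Fin (n + 3) → V), Function.Injective c →
      (∀ i : Fin (n + 3), G.Adj (c i) (c (i + 1))) →
      ({i : Fin (n + 3) | IsRedEdge z (c i) (c (i + 1))}.ncard = 0 ∨
        {i : Fin (n + 3) | IsRedEdge z (c i) (c (i + 1))}.ncard = n + 3 ∨
        (2 ≤ {i : Fin (n + 3) | IsRedEdge z (c i) (c (i + 1))}.ncard ∧
          2 ≤ {i : Fin (n + 3) | ¬ IsRedEdge z (c i) (c (i + 1))}.ncard)) := by
  obtain ⟨A, hA1, hA⟩ := exists_edgeFormsHaveOrder hpos heq hgen hboundary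
  refine ⟨exists_isRedEdge hconn hw0 hwproj hA hA1, exists_not_isRedEdge hconn hz0 hzproj,
    fun n c _ hc => ?_⟩
  have hred := hA.ncard_setOf_isRedEdge_ne_one c hc
  have hblue := ncard_setOf_not_isRedEdge_ne_one (z := z) c
  have htot : {i : Fin (n + 3) | IsRedEdge z (c i) (c (i + 1))}.ncard +
      {i : Fin (n + 3) | ¬ IsRedEdge z (c i) (c (i + 1))}.ncard = n + 3 := by
    rw [← Set.compl_ofPred, Set.ncard_add_ncard_compl, Nat.card_eq_fintype_card,
      Fintype.card_fin]
  omega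

/-- Lemma `lem:NAC`: the coloring defined by a point on the boundary of the configuration
variety of a connected graph `(V, E, λ)` — edge `(i,j)` red if `z_i - z_j` vanishes at the
point, blue otherwise — is a NAC-coloring: both color classes are nonempty and no cycle
has exactly one edge of some color.  The boundary point lies in
`P^{|V|-2} × P^{|V|-2}`; here a branch of the configuration variety through it is given by
power-series coordinates `z, w : V → ℂ[[t]]` (normalized by `z_{v₀} = w_{v₀} = 0`)
satisfying the bihomogeneous edge equations
`λ_{ij}(z_k - z_l)(w_k - w_l) = λ_{kl}(z_i - z_j)(w_i - w_j)`, generically not on the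
boundary, and with all edge forms `(z_i - z_j)(w_i - w_j)` vanishing at the point. -/
theorem boundary_point_gives_NAC_coloring
    (V : Type) [Fintype V] [DecidableEq V] (G : SimpleGraph V) (hconn : G.Connected)
    (lam : V → V → ℝ)
    (hpos : ∀ u v, G.Adj u v → 0 < lam u v) (hsymm : ∀ u v, lam u v = lam v u)
    (z w : V → PowerSeries ℂ) (v₀ : V) (hz0 : z v₀ = 0) (hw0 : w v₀ = 0)
    (heq : ∀ i j k l, G.Adj i j → G.Adj k l →
      PowerSeries.C ((lam i j : ℝ) : ℂ) * ((z k - z l) * (w k - w l)) =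
        PowerSeries.C ((lam k l : ℝ) : ℂ) * ((z i - z j) * (w i - w j)))
    (hgen : ∃ i j, G.Adj i j ∧ (z i - z j) * (w i - w j) ≠ 0)
    (hboundary : ∀ i j, G.Adj i j →
      PowerSeries.constantCoeff ((z i - z j) * (w i - w j)) = 0)
    (hzproj : ∃ v, PowerSeries.constantCoeff (z v) ≠ 0)
    (hwproj : ∃ v, PowerSeries.constantCoeff (w v) ≠ 0) :
    (∃ i j, G.Adj i j ∧ IsRedEdge z i j) ∧
    (∃ i j, G.Adj i j ∧ ¬ IsRedEdge z i j) ∧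
    ∀ (n : ℕ) (c : Fin (n + 3) → V), Function.Injective c →
      (∀ i : Fin (n + 3), G.Adj (c i) (c (i + 1))) →
      ({i : Fin (n + 3) | IsRedEdge z (c i) (c (i + 1))}.ncard = 0 ∨
        {i : Fin (n + 3) | IsRedEdge z (c i) (c (i + 1))}.ncard = n + 3 ∨
        (2 ≤ {i : Fin (n + 3) | IsRedEdge z (c i) (c (i + 1))}.ncard ∧
          2 ≤ {i : Fin (n + 3) | ¬ IsRedEdge z (c i) (c (i + 1))}.ncard)) :=
  boundary_point_gives_NAC_coloring_general V G hconn lam hpos z w v₀ hz0 hw0 heq hgen hboundary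
    hzproj hwproj
end

section
/- Consider the real quartic curve in coordinates (m₁₁, m₁₂, x₃, h) defined by m₁₁² + m₁₂² − h² = 0 and x₃² − 2α m₁₁ h + β h² = 0 (α ≠ 0), describing a motion in the subgroup of SE₃ generated by rotations about the z-axis and translations along it. Then a leg with base anchor a = (a₁,a₂,a₃), platform anchor b = (b₁,b₂,b₃) and length d keeps constant length d throughout this motion if and only if a₁b₂ − a₂b₁ = 0, a₁b₁ + a₂b₂ = α, a₃ = b₃, and a₁² + a₂² + b₁² + b₂² − d² = β. -/
/-- The Bricard–Borel motion: the quartic curve `m₁₁² + m₁₂² - h² = 0`,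
`x₃² - 2α m₁₁ h + β h² = 0` (with `α ≠ 0`) in the subgroup of `SE₃` generated by
rotations about the `z`-axis and translations along it.  A leg with base anchor
`a = (a₁,a₂,a₃)`, platform anchor `b = (b₁,b₂,b₃)` and length `d` keeps constant
length `d` throughout this motion if and only if `a₁b₂ - a₂b₁ = 0`,
`a₁b₁ + a₂b₂ = α`, `a₃ = b₃` and `a₁² + a₂² + b₁² + b₂² - d² = β`. -/
theorem bricard_borel_leg_condition (α β : ℝ) (hα : α ≠ 0)
    (a₁ a₂ a₃ b₁ b₂ b₃ d : ℝ) :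
    (∀ m₁₁ m₁₂ x₃ h : ℂ, h ≠ 0 → m₁₁ ^ 2 + m₁₂ ^ 2 - h ^ 2 = 0 →
        x₃ ^ 2 - 2 * (α : ℂ) * m₁₁ * h + (β : ℂ) * h ^ 2 = 0 →
        ((m₁₁ / h) * (a₁ : ℂ) - (m₁₂ / h) * (a₂ : ℂ) - (b₁ : ℂ)) ^ 2 +
          ((m₁₂ / h) * (a₁ : ℂ) + (m₁₁ / h) * (a₂ : ℂ) - (b₂ : ℂ)) ^ 2 +
          ((a₃ : ℂ) + x₃ / h - (b₃ : ℂ)) ^ 2 = (d : ℂ) ^ 2) ↔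
      (a₁ * b₂ - a₂ * b₁ = 0 ∧ a₁ * b₁ + a₂ * b₂ = α ∧ a₃ = b₃ ∧
        a₁ ^ 2 + a₂ ^ 2 + b₁ ^ 2 + b₂ ^ 2 - d ^ 2 = β) := by
  
  have hαC : (α : ℂ) ≠ 0 := by exact_mod_cast hα
  constructor
  · intro H
    -- key linear relation
    have key : ∀ c s t : ℂ, c ^ 2 + s ^ 2 = 1 → t ^ 2 = 2 * (α : ℂ) * c - β →
        2 * ((α : ℂ) - a₁ * b₁ - a₂ * b₂) * c - 2 * ((a₁ : ℂ) * b₂ - a₂ * b₁) * s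
          + 2 * ((a₃ : ℂ) - b₃) * t
          + ((a₁ : ℂ) ^ 2 + a₂ ^ 2 + b₁ ^ 2 + b₂ ^ 2 + ((a₃ : ℂ) - b₃) ^ 2 - β - d ^ 2) = 0 := by
      intro c s t hc ht
      have E1 := H c s t 1 one_ne_zero (by linear_combination hc) (by linear_combination ht)
      simp only [div_one] at E1
      linear_combination E1 - ((a₁ : ℂ) ^ 2 + (a₂ : ℂ) ^ 2) * hc - ht
    -- choose c₀ with c₀ ∉ {1,-1} and 2αc₀ ≠ β
    obtain ⟨c₀, hc₀a, hc₀b⟩ : ∃ c₀ : ℂ, (1 - c₀ ^ 2) ≠ 0 ∧ 2 * (α : ℂ) * c₀ - β ≠ 0 := by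
      by_cases hb : (β : ℂ) = 4 * α
      · exact ⟨3, by norm_num, by rw [hb]; intro hc; apply hαC; linear_combination (1/2 : ℂ) * hc⟩
      · refine ⟨2, by norm_num, fun hc => hb ?_⟩
        linear_combination -hc
    obtain ⟨s₀, hs₀⟩ := IsAlgClosed.exists_pow_nat_eq (1 - c₀ ^ 2) (hn := by norm_num) (n := 2)
    obtain ⟨t₀, ht₀⟩ := IsAlgClosed.exists_pow_nat_eq (2 * (α : ℂ) * c₀ - β) (hn := by norm_num) (n := 2)
    have hs₀' : s₀ ≠ 0 := fun h => hc₀a (by rw [← hs₀, h]; ring)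
    have ht₀' : t₀ ≠ 0 := fun h => hc₀b (by rw [← ht₀, h]; ring)
    have hcirc : c₀ ^ 2 + s₀ ^ 2 = 1 := by rw [hs₀]; ring
    have hpar : t₀ ^ 2 = 2 * (α : ℂ) * c₀ - β := ht₀
    have K1 := key c₀ s₀ t₀ hcirc hpar
    have K2 := key c₀ (-s₀) t₀ (by rw [← hcirc]; ring) hpar
    have K3 := key c₀ s₀ (-t₀) hcirc (by rw [← hpar]; ring)
    have hQ : (a₁ : ℂ) * b₂ - a₂ * b₁ = 0 := by
      have : 4 * ((a₁ : ℂ) * b₂ - a₂ * b₁) * s₀ = 0 := by linear_combination K2 - K1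
      rcases mul_eq_zero.mp this with h | h
      · rcases mul_eq_zero.mp h with h' | h'
        · norm_num at h'
        · exact h'
      · exact absurd h hs₀'
    have hR : (a₃ : ℂ) - b₃ = 0 := by
      have : 4 * ((a₃ : ℂ) - b₃) * t₀ = 0 := by linear_combination K1 - K3
      rcases mul_eq_zero.mp this with h | h
      · rcases mul_eq_zero.mp h with h' | h'
        · norm_num at h'
        · exact h'
      · exact absurd h ht₀'
    obtain ⟨t₁, ht₁⟩ := IsAlgClosed.exists_pow_nat_eq (2 * (α : ℂ) * 1 - β) (hn := by norm_num) (n := 2)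
    obtain ⟨t₂, ht₂⟩ := IsAlgClosed.exists_pow_nat_eq (2 * (α : ℂ) * (-1) - β) (hn := by norm_num) (n := 2)
    have K4 := key 1 0 t₁ (by norm_num) ht₁
    have K5 := key (-1) 0 t₂ (by norm_num) ht₂
    have ht₁z : 2 * ((a₃ : ℂ) - b₃) * t₁ = 0 := by rw [hR]; ring
    have ht₂z : 2 * ((a₃ : ℂ) - b₃) * t₂ = 0 := by rw [hR]; ring
    have hP : (α : ℂ) - a₁ * b₁ - a₂ * b₂ = 0 := by
      linear_combination (1/4 : ℂ) * K4 - (1/4 : ℂ) * K5 - (1/4 : ℂ) * ht₁z + (1/4 : ℂ) * ht₂z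
    have hE : (a₁ : ℂ) ^ 2 + a₂ ^ 2 + b₁ ^ 2 + b₂ ^ 2 - β - d ^ 2 = 0 := by
      linear_combination (1/2 : ℂ) * K4 + (1/2 : ℂ) * K5 - (1/2 : ℂ) * ht₁z - (1/2 : ℂ) * ht₂z
        - ((a₃ : ℂ) - b₃) * hR
    refine ⟨by exact_mod_cast hQ, ?_, ?_, ?_⟩
    · have : (a₁ : ℂ) * b₁ + a₂ * b₂ = α := by linear_combination -hP
      exact_mod_cast this
    · have : (a₃ : ℂ) = b₃ := by linear_combination hR
      exact_mod_cast this
    · have : (a₁ : ℂ) ^ 2 + a₂ ^ 2 + b₁ ^ 2 + b₂ ^ 2 - d ^ 2 = β := by linear_combination hE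
      exact_mod_cast this
  · rintro ⟨h1, h2, h3, h4⟩ m₁₁ m₁₂ x₃ h hh hcirc hx
    have h1' : (a₁ : ℂ) * b₂ - a₂ * b₁ = 0 := by exact_mod_cast h1
    have h2' : (a₁ : ℂ) * b₁ + a₂ * b₂ = α := by exact_mod_cast h2
    have h3' : (a₃ : ℂ) = b₃ := by exact_mod_cast h3
    have h4' : (a₁ : ℂ) ^ 2 + a₂ ^ 2 + b₁ ^ 2 + b₂ ^ 2 - d ^ 2 = β := by exact_mod_cast h4
    have hh2 : h ^ 2 ≠ 0 := pow_ne_zero _ hh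
    field_simp
    linear_combination ((a₁ : ℂ) ^ 2 + a₂ ^ 2) * hcirc + hx + (-2 * m₁₂ * h) * h1'
      + (-2 * m₁₁ * h) * h2' + (2 * h * x₃ + h ^ 2 * a₃ - h ^ 2 * b₃) * h3' + h ^ 2 * h4'
end
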